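/- Let $f$ be a nonnegative real-valued function on the positive integers, let $x \ge 1$ be real, and let $D$ be a real parameter with $1 \le D \le x$. Then $\sum_{D < n \le x} f\left(\left\lfloor \frac{x}{n} \right\rfloor\right) = \sum_{d \le x/D} f(d) \sum_{x/(d+1) < n \le x/d} 1 + O\left(f\left(\left\lfloor \frac{x}{D}\right\rfloor\right)\left(1 + \frac{D^2}{x}\right)\right)$, where the inner sums count positive integers $n$ in the indicated ranges. -/

import Mathlib

/-!
For `n ≥ 1` and `d ≥ 1`, `⌊x / n⌋ = d` exactly when `x / (d + 1) < n ≤ x / d`, so grouping the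
`n ∈ (D, x]` by the value `d = ⌊x / n⌋ ≤ x / D` gives the main term, except that the block of
`d₀ = ⌊x / D⌋` is cut off at `D`. Every other block lies above `x / (d + 1) ≥ x / d₀ ≥ D`. The
missing part of the block of `d₀` consists of the integers in `(x / (d₀ + 1), D]`, of which there
are at most `1 + D - x / (d₀ + 1) ≤ 1 + D / (d₀ + 1) ≤ 1 + D ^ 2 / x`.
-/

open Finset

theorem floor_div_eq_iff {x n : ℝ} {d : ℕ} (hn : 0 < n) (hd : d ≠ 0) :
    ⌊x / n⌋₊ = d ↔ x / (d + 1) < n ∧ n ≤ x / d := by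
  have hd0 : (0 : ℝ) < d := by positivity
  rw [Nat.floor_eq_iff' hd, le_div_iff₀ hn, div_lt_iff₀ hn, le_div_iff₀ hd0,
    div_lt_iff₀ (by positivity), mul_comm n, mul_comm n]
  exact and_comm

theorem card_filter_lt_le_le {a b : ℝ} (s : Finset ℕ) (ha : 0 ≤ a) (hab : a ≤ b) :
    (#(s.filter fun n : ℕ => a < n ∧ (n : ℝ) ≤ b) : ℝ) ≤ b - a + 1 := by
  have hsub : s.filter (fun n : ℕ => a < n ∧ (n : ℝ) ≤ b) ⊆ Ioc ⌊a⌋₊ ⌊b⌋₊ := fun n hn => by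
    obtain ⟨-, han, hnb⟩ := mem_filter.mp hn
    exact mem_Ioc.mpr ⟨(Nat.floor_lt ha).mpr han, Nat.le_floor hnb⟩
  have hcard := card_le_card hsub
  rw [Nat.card_Ioc] at hcard
  calc (#(s.filter fun n : ℕ => a < n ∧ (n : ℝ) ≤ b) : ℝ)
      ≤ ((⌊b⌋₊ - ⌊a⌋₊ : ℕ) : ℝ) := by exact_mod_cast hcard
    _ = ⌊b⌋₊ - ⌊a⌋₊ := Nat.cast_sub (Nat.floor_le_floor hab)
    _ ≤ b - a + 1 := by linarith [Nat.floor_le (ha.trans hab), Nat.lt_floor_add_one a]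

noncomputable def floorDivFiber (x : ℝ) (d : ℕ) : Finset ℕ :=
  (Ioc 0 ⌈x⌉₊).filter (fun n : ℕ => x / (d + 1) < (n : ℝ) ∧ (n : ℝ) ≤ x / d)

section

variable {x : ℝ}

theorem filter_floor_div_eq_floorDivFiber (hx : 0 ≤ x) {d : ℕ} (hd : d ≠ 0) :
    (Ioc 0 ⌊x⌋₊).filter (fun n : ℕ => ⌊x / n⌋₊ = d) = floorDivFiber x d := by
  ext n
  simp only [floorDivFiber, mem_filter, mem_Ioc]
  constructor
  · rintro ⟨⟨hn, hnx⟩, hfloor⟩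
    exact ⟨⟨hn, hnx.trans (Nat.floor_le_ceil x)⟩, (floor_div_eq_iff (by positivity) hd).mp hfloor⟩
  · rintro ⟨⟨hn, -⟩, hlt, hle⟩
    have hd₁ : (1 : ℝ) ≤ d := by exact_mod_cast Nat.one_le_iff_ne_zero.mpr hd
    have hnx : (n : ℝ) ≤ x := hle.trans (div_le_self hx hd₁)
    exact ⟨⟨hn, Nat.le_floor hnx⟩, (floor_div_eq_iff (by positivity) hd).mpr ⟨hlt, hle⟩⟩

theorem lt_of_mem_floorDivFiber {D : ℝ} {d n : ℕ} (hD : (d + 1) * D ≤ x)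
    (hn : n ∈ floorDivFiber x d) : D < n := by
  obtain ⟨-, hlt, -⟩ := mem_filter.mp hn
  exact lt_of_le_of_lt ((le_div_iff₀ (by positivity)).mpr (by linarith)) hlt

theorem card_filter_floorDivFiber_le {D : ℝ} (hD : 0 < D) (hDx : D ≤ x) :
    (#((floorDivFiber x ⌊x / D⌋₊).filter fun n : ℕ => ¬ D < n) : ℝ) ≤ 1 + D ^ 2 / x := by
  set d₀ := ⌊x / D⌋₊
  have hx : 0 < x := hD.trans_le hDx
  have hd₀D : d₀ * D ≤ x := (le_div_iff₀ hD).mp (Nat.floor_le (by positivity))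
  have hxd₀ : x < (d₀ + 1) * D := (div_lt_iff₀ hD).mp (Nat.lt_floor_add_one _)
  have hsub : (floorDivFiber x d₀).filter (fun n : ℕ => ¬ D < n)
      ⊆ (Ioc 0 ⌈x⌉₊).filter (fun n : ℕ => x / (d₀ + 1) < n ∧ (n : ℝ) ≤ D) := fun n hn => by
    simp only [floorDivFiber, mem_filter, not_lt] at hn ⊢
    exact ⟨hn.1.1, hn.1.2.1, hn.2⟩
  have hgap : D - x / (d₀ + 1) ≤ D ^ 2 / x := by
    rw [sub_le_iff_le_add, div_add_div _ _ hx.ne' (by positivity), le_div_iff₀ (by positivity)]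
    nlinarith
  calc (#((floorDivFiber x d₀).filter fun n : ℕ => ¬ D < n) : ℝ)
      ≤ #((Ioc 0 ⌈x⌉₊).filter (fun n : ℕ => x / (d₀ + 1) < n ∧ (n : ℝ) ≤ D)) := by
        exact_mod_cast card_le_card hsub
    _ ≤ D - x / (d₀ + 1) + 1 :=
        card_filter_lt_le_le _ (by positivity) ((div_lt_iff₀ (by positivity)).mpr (by linarith)).le
    _ ≤ 1 + D ^ 2 / x := by linarith

theorem abs_sum_floor_div_sub_sum_card_floorDivFiber_le {f : ℕ → ℝ} (hf : ∀ n, 0 ≤ f n) {D : ℝ}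
    (hD : 0 < D) (hDx : D ≤ x) :
    |(∑ n ∈ (Ioc 0 ⌊x⌋₊).filter (fun n : ℕ => D < n), f ⌊x / n⌋₊)
      - ∑ d ∈ Icc 1 ⌊x / D⌋₊, f d * #(floorDivFiber x d)| ≤ f ⌊x / D⌋₊ * (1 + D ^ 2 / x) := by
  set d₀ := ⌊x / D⌋₊
  have hx : 0 < x := hD.trans_le hDx
  have hd₀ : d₀ ∈ Icc 1 d₀ :=
    mem_Icc.mpr ⟨Nat.le_floor (by simpa using (one_le_div hD).mpr hDx), le_rfl⟩
  have hmaps : ∀ n ∈ (Ioc 0 ⌊x⌋₊).filter (fun n : ℕ => D < n), ⌊x / n⌋₊ ∈ Icc 1 d₀ := by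
    intro n hn
    obtain ⟨hn, hDn⟩ := mem_filter.mp hn
    obtain ⟨hn0, hnx⟩ := mem_Ioc.mp hn
    have hnx : (n : ℝ) ≤ x := (Nat.le_floor_iff hx.le).mp hnx
    refine mem_Icc.mpr ⟨Nat.le_floor ?_, Nat.floor_le_floor ?_⟩
    · rwa [Nat.cast_one, one_le_div (by positivity)]
    · exact div_le_div_of_nonneg_left hx.le hD hDn.le
  have hfibers : ∑ n ∈ (Ioc 0 ⌊x⌋₊).filter (fun n : ℕ => D < n), f ⌊x / n⌋₊
      = ∑ d ∈ Icc 1 d₀, f d * #((floorDivFiber x d).filter fun n : ℕ => D < n) := by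
    rw [← sum_fiberwise_of_maps_to' hmaps f]
    refine sum_congr rfl fun d hd => ?_
    rw [sum_const, nsmul_eq_mul, mul_comm, filter_comm,
      filter_floor_div_eq_floorDivFiber hx.le (by have := (mem_Icc.mp hd).1; omega)]
  have hcut : ∀ d, f d * #((floorDivFiber x d).filter fun n : ℕ => D < n)
      - f d * #(floorDivFiber x d)
      = -(f d * #((floorDivFiber x d).filter fun n : ℕ => ¬ D < n)) := fun d => by
    rw [← card_filter_add_card_filter_not (s := floorDivFiber x d) (fun n : ℕ => D < n)]
    push_cast
    ring
  have hsingle : ∑ d ∈ Icc 1 d₀, f d * #((floorDivFiber x d).filter fun n : ℕ => ¬ D < n)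
      = f d₀ * #((floorDivFiber x d₀).filter fun n : ℕ => ¬ D < n) := by
    refine sum_eq_single_of_mem d₀ hd₀ fun d hd hne => ?_
    have hd₁ : ((d : ℝ) + 1) * D ≤ x := calc
      ((d : ℝ) + 1) * D ≤ d₀ * D := by
        gcongr; exact_mod_cast Nat.lt_of_le_of_ne (mem_Icc.mp hd).2 hne
      _ ≤ x := (le_div_iff₀ hD).mp (Nat.floor_le (by positivity))
    rw [filter_false_of_mem fun n hn => not_not.mpr (lt_of_mem_floorDivFiber hd₁ hn)]
    simp
  rw [hfibers, ← sum_sub_distrib, sum_congr rfl fun d _ => hcut d, sum_neg_distrib, abs_neg,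
    hsingle, abs_of_nonneg (mul_nonneg (hf _) (Nat.cast_nonneg _))]
  exact mul_le_mul_of_nonneg_left (card_filter_floorDivFiber_le hD hDx) (hf _)

end

theorem stmt4 :
    ∃ C > (0:ℝ), ∀ f : ℕ → ℝ, (∀ n, 0 ≤ f n) → ∀ x : ℝ, 1 ≤ x →
      ∀ D : ℝ, 1 ≤ D → D ≤ x →
      |(∑ n ∈ (Finset.Ioc 0 ⌊x⌋₊).filter (fun n : ℕ => D < (n : ℝ)), f ⌊x / (n : ℝ)⌋₊)
        - ∑ d ∈ Finset.Icc 1 ⌊x / D⌋₊, f d *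
            (((Finset.Ioc 0 ⌈x⌉₊).filter
              (fun n : ℕ => x / (d + 1) < (n : ℝ) ∧ (n : ℝ) ≤ x / d)).card : ℝ)|
        ≤ C * f ⌊x / D⌋₊ * (1 + D ^ 2 / x) := by
  refine ⟨1, one_pos, fun f hf x _ D hD hDx => ?_⟩
  rw [one_mul]
  exact abs_sum_floor_div_sub_sum_card_floorDivFiber_le hf (by linarith) hDx
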